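/- Let f_n : 2^ω → {0,1} (n ∈ ω) be a sequence of (s)-measurable functions. Then there exist a perfect tree Q ⊆ 2^{<ω} and a subsequence {f_{n_k}} which converges uniformly on [Q]. -/

import Mathlib

open Set

/-- A perfect (Sacks) tree: nonempty, downward closed, and every node has a splitting extension. -/
def IsPerfectTree (T : Set (List Bool)) : Prop :=
  T.Nonempty ∧ (∀ t ∈ T, ∀ n, t.take n ∈ T) ∧
    ∀ t ∈ T, ∃ s ∈ T, t <+: s ∧ s ++ [false] ∈ T ∧ s ++ [true] ∈ T

/-- The set of infinite branches of a tree. -/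
def branches (T : Set (List Bool)) : Set (ℕ → Bool) :=
  {x | ∀ n, (List.ofFn fun i : Fin n => x i) ∈ T}

/-- `A` is an (s)-set. -/
def MarczewskiS (A : Set (ℕ → Bool)) : Prop :=
  ∀ T, IsPerfectTree T → ∃ Q, IsPerfectTree Q ∧ Q ⊆ T ∧
    (branches Q ⊆ A ∨ branches Q ∩ A = ∅)

/-- `A` is an (s⁰)-set. -/
def S0Set (A : Set (ℕ → Bool)) : Prop :=
  ∀ T, IsPerfectTree T → ∃ Q, IsPerfectTree Q ∧ Q ⊆ T ∧ branches Q ∩ A = ∅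

/-!
By (s)-measurability, every perfect tree has, for each `m`, a perfect subtree on whose branches
`f m` is constant. Either for some `R` and `b` infinitely many of the sets `{f m = b}` are dense
below `R`, or for every `T` only finitely many `{f m = false}` are dense below `T`, and then any
finitely many perfect trees all have perfect subtrees with `f m ≡ true`, for every large `m`.
In both cases finitely many perfect subtrees of `R` can be refined simultaneously so that
`f m ≡ b` on their branches, for arbitrarily large `m`.

A fusion then builds `Q`: at stage `k` there are finitely many trees, each with a stem; each
tree is cut down to the nodes comparable with its stem, refined for a common `m_k`, and split
above its stem into two new stems. `Q` is generated by all the stems. As the branches of a finite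
union of trees are the union of their branches, each branch of `Q` is a branch of a tree of
every stage, so `f m_k ≡ b` on `[Q]`.
-/

theorem ofFn_eq_take_ofFn (x : ℕ → Bool) {n N : ℕ} (h : n ≤ N) :
    (List.ofFn fun i : Fin n => x i) = (List.ofFn fun i : Fin N => x i).take n :=
  Fin.ofFn_take_eq_take_ofFn h (fun i : Fin N => x i)

theorem isPerfectTree_univ : IsPerfectTree univ :=
  ⟨⟨[], trivial⟩, fun _ _ _ => trivial,
    fun t _ => ⟨t, trivial, List.prefix_refl t, trivial, trivial⟩⟩

theorem prefix_of_forall_concat_comparable {s v : List Bool}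
    (h : ∀ i : Bool, s ++ [i] <+: v ∨ v <+: s ++ [i]) : v <+: s := by
  by_contra hvs
  have hchild (i : Bool) : s ++ [i] <+: v := by
    rcases h i with h | h
    · exact h
    · rcases List.prefix_concat_iff.mp h with rfl | h
      · exact List.prefix_refl _
      · exact absurd h hvs
  have := List.prefix_of_prefix_length_le (hchild false) (hchild true) (by simp)
  simp at this

def treeCone (T : Set (List Bool)) (v : List Bool) : Set (List Bool) :=
  {u ∈ T | u <+: v ∨ v <+: u}

theorem treeCone_subset (T : Set (List Bool)) (v : List Bool) : treeCone T v ⊆ T :=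
  fun _ hu => hu.1

namespace IsPerfectTree

variable {T : Set (List Bool)}

theorem mem_of_prefix (hT : IsPerfectTree T) {u v : List Bool} (huv : u <+: v) (hv : v ∈ T) :
    u ∈ T := by
  rw [List.prefix_iff_eq_take.mp huv]
  exact hT.2.1 v hv _

theorem nil_mem (hT : IsPerfectTree T) : [] ∈ T :=
  let ⟨_, ht⟩ := hT.1
  hT.mem_of_prefix List.nil_prefix ht

theorem exists_split_above_of_subset_treeCone {Q : Set (List Bool)} (hQ : IsPerfectTree Q)
    {v : List Bool} (hQT : Q ⊆ treeCone T v) :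
    ∃ w, v <+: w ∧ ∀ i : Bool, w ++ [i] ∈ Q := by
  obtain ⟨t, ht⟩ := hQ.1
  obtain ⟨s, -, -, h0, h1⟩ := hQ.2.2 t ht
  have hchild : ∀ i : Bool, s ++ [i] ∈ Q := fun i => by cases i <;> assumption
  exact ⟨s, prefix_of_forall_concat_comparable fun i => (hQT (hchild i)).2, hchild⟩

theorem treeCone (hT : IsPerfectTree T) {v : List Bool} (hv : v ∈ T) :
    IsPerfectTree (treeCone T v) := by
  refine ⟨⟨v, hv, Or.inl (List.prefix_refl v)⟩, ?_, ?_⟩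
  · rintro t ⟨htT, hcomp⟩ n
    refine ⟨hT.2.1 t htT n, ?_⟩
    rcases hcomp with h | h
    · exact Or.inl ((List.take_prefix n t).trans h)
    · exact List.prefix_or_prefix_of_prefix (List.take_prefix n t) h
  · rintro t ⟨htT, hcomp⟩
    obtain ⟨u, huT, htu, hvu⟩ : ∃ u ∈ T, t <+: u ∧ v <+: u := by
      rcases hcomp with h | h
      · exact ⟨v, hv, h, List.prefix_refl v⟩
      · exact ⟨t, htT, List.prefix_refl t, h⟩
    obtain ⟨s, hsT, hus, h0, h1⟩ := hT.2.2 u huT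
    have hvs := hvu.trans hus
    exact ⟨s, ⟨hsT, Or.inr hvs⟩, htu.trans hus,
      ⟨h0, Or.inr (hvs.trans (List.prefix_append s _))⟩,
      ⟨h1, Or.inr (hvs.trans (List.prefix_append s _))⟩⟩

end IsPerfectTree

theorem branches_mono {Q T : Set (List Bool)} (h : Q ⊆ T) : branches Q ⊆ branches T :=
  fun _ hx n => h (hx n)

theorem branches_biUnion_subset {ι : Type*} {s : Set ι} (hs : s.Finite) {T : ι → Set (List Bool)}
    (hT : ∀ i ∈ s, ∀ t ∈ T i, ∀ n, t.take n ∈ T i) :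
    branches (⋃ i ∈ s, T i) ⊆ ⋃ i ∈ s, branches (T i) := by
  intro x hx
  by_contra hxs
  simp only [mem_iUnion, not_exists, branches, mem_ofPred_eq, not_forall] at hxs
  choose! n hn using hxs
  obtain ⟨N, hN⟩ := (hs.image n).bddAbove
  obtain ⟨i, hi, hxi⟩ := mem_iUnion₂.mp (hx N)
  apply hn i hi
  rw [ofFn_eq_take_ofFn x (hN (mem_image_of_mem n hi))]
  exact hT i hi _ hxi _

def HasPerfectSubtreeIn (T : Set (List Bool)) (A : Set (ℕ → Bool)) : Prop :=
  ∃ Q, IsPerfectTree Q ∧ Q ⊆ T ∧ branches Q ⊆ A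

def DenseBelow (T : Set (List Bool)) (A : Set (ℕ → Bool)) : Prop :=
  ∀ P, IsPerfectTree P → P ⊆ T → HasPerfectSubtreeIn P A

theorem HasPerfectSubtreeIn.mono {P T : Set (List Bool)} {A : Set (ℕ → Bool)}
    (h : HasPerfectSubtreeIn P A) (hPT : P ⊆ T) : HasPerfectSubtreeIn T A :=
  let ⟨Q, hQ, hQP, hQA⟩ := h
  ⟨Q, hQ, hQP.trans hPT, hQA⟩

namespace MarczewskiS

variable {A : Set (ℕ → Bool)} {T : Set (List Bool)}

theorem hasPerfectSubtreeIn_or_compl (hA : MarczewskiS A) (hT : IsPerfectTree T) :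
    HasPerfectSubtreeIn T A ∨ HasPerfectSubtreeIn T Aᶜ := by
  obtain ⟨Q, hQ, hQT, hin | hout⟩ := hA T hT
  · exact Or.inl ⟨Q, hQ, hQT, hin⟩
  · exact Or.inr ⟨Q, hQ, hQT, fun x hx hxA => hout.subset ⟨hx, hxA⟩⟩

theorem hasPerfectSubtreeIn_of_not_denseBelow_compl (hA : MarczewskiS A)
    (h : ¬ DenseBelow T Aᶜ) : HasPerfectSubtreeIn T A := by
  simp only [DenseBelow, not_forall] at h
  obtain ⟨P, hP, hPT, hPA⟩ := h
  exact ((hA.hasPerfectSubtreeIn_or_compl hP).resolve_right hPA).mono hPT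

end MarczewskiS

def FrequentlyRefinable (R : Set (List Bool)) (A : ℕ → Set (ℕ → Bool)) : Prop :=
  ∀ Ps : Set (Set (List Bool)), Ps.Finite → (∀ P ∈ Ps, IsPerfectTree P ∧ P ⊆ R) →
    ∀ n, ∃ m ≥ n, ∀ P ∈ Ps, HasPerfectSubtreeIn P (A m)

theorem exists_frequentlyRefinable_preimage_singleton (f : ℕ → (ℕ → Bool) → Bool)
    (hmeas : ∀ n, MarczewskiS (f n ⁻¹' {true})) :
    ∃ R b, IsPerfectTree R ∧ FrequentlyRefinable R fun m => f m ⁻¹' {b} := by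
  by_cases h : ∃ T b, IsPerfectTree T ∧ {m | DenseBelow T (f m ⁻¹' {b})}.Infinite
  · obtain ⟨T, b, hT, hinf⟩ := h
    refine ⟨T, b, hT, fun Ps _ hPs n => ?_⟩
    obtain ⟨m, hm, hnm⟩ := hinf.exists_gt n
    exact ⟨m, hnm.le, fun P hP => hm P (hPs P hP).1 (hPs P hP).2⟩
  · simp only [not_exists, not_and, not_infinite] at h
    refine ⟨univ, true, isPerfectTree_univ, fun Ps hPs hPsR n => ?_⟩
    have hfin : (⋃ P ∈ Ps, {m | DenseBelow P (f m ⁻¹' {false})}).Finite :=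
      hPs.biUnion fun P hP => h P false (hPsR P hP).1
    obtain ⟨m, hm, hnm⟩ := hfin.infinite_compl.exists_gt n
    refine ⟨m, hnm.le, fun P hP => (hmeas m).hasPerfectSubtreeIn_of_not_denseBelow_compl ?_⟩
    rw [← preimage_compl, Bool.compl_singleton]
    exact fun hdense => hm (mem_biUnion hP hdense)

section Fusion

/-- Stages of the fusion are sets of pairs (tree, stem). -/
def StemsSplitInto (S S' : Set (Set (List Bool) × List Bool)) : Prop :=
  ∀ p ∈ S, ∃ w, p.2 <+: w ∧ ∀ i : Bool, ∃ P, (P, w ++ [i]) ∈ S'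

variable {S : ℕ → Set (Set (List Bool) × List Bool)}

def fusionLimit (S : ℕ → Set (Set (List Bool) × List Bool)) : Set (List Bool) :=
  {u | ∃ k, ∃ p ∈ S k, u <+: p.2}

theorem isPerfectTree_fusionLimit (h0 : (S 0).Nonempty)
    (hsplit : ∀ k, StemsSplitInto (S k) (S (k + 1))) :
    IsPerfectTree (fusionLimit S) := by
  obtain ⟨p, hp⟩ := h0
  have hprefix {u v : List Bool} (huv : u <+: v) : v ∈ fusionLimit S → u ∈ fusionLimit S :=
    fun ⟨k, p, hp, hvp⟩ => ⟨k, p, hp, huv.trans hvp⟩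
  refine ⟨⟨[], 0, p, hp, List.nil_prefix⟩, fun t ht n => hprefix (List.take_prefix n t) ht, ?_⟩
  rintro t ⟨k, p, hp, htp⟩
  obtain ⟨w, hpw, hchild⟩ := hsplit k p hp
  have hchild_mem (i : Bool) : w ++ [i] ∈ fusionLimit S :=
    let ⟨_, hP⟩ := hchild i
    ⟨k + 1, _, hP, List.prefix_refl _⟩
  exact ⟨w, hprefix (List.prefix_append w _) (hchild_mem false), htp.trans hpw,
    hchild_mem false, hchild_mem true⟩

theorem exists_stem_extension
    (hsplit : ∀ k, StemsSplitInto (S k) (S (k + 1)))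
    {j k : ℕ} (hjk : j ≤ k) {p : Set (List Bool) × List Bool} (hp : p ∈ S j) :
    ∃ q ∈ S k, p.2 <+: q.2 := by
  induction k, hjk using Nat.le_induction with
  | base => exact ⟨p, hp, List.prefix_refl _⟩
  | succ k _ ih =>
    obtain ⟨q, hq, hpq⟩ := ih
    obtain ⟨w, hqw, hchild⟩ := hsplit k q hq
    obtain ⟨P, hP⟩ := hchild false
    exact ⟨_, hP, (hpq.trans hqw).trans (List.prefix_append _ _)⟩

theorem fusionLimit_subset_biUnion (htree : ∀ k, ∀ p ∈ S k, IsPerfectTree p.1 ∧ p.2 ∈ p.1)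
    (hsplit : ∀ k, StemsSplitInto (S k) (S (k + 1)))
    (hnest : ∀ k, (⋃ q ∈ S (k + 1), q.1) ⊆ ⋃ p ∈ S k, p.1) (k : ℕ) :
    fusionLimit S ⊆ ⋃ p ∈ S k, p.1 := by
  have hanti : Antitone fun k => ⋃ p ∈ S k, p.1 := antitone_nat_of_succ_le hnest
  rintro u ⟨j, p, hp, hup⟩
  obtain ⟨q, hq, hpq⟩ := exists_stem_extension hsplit (le_max_left j k) hp
  obtain ⟨r, hr, hqr⟩ :=
    mem_iUnion₂.mp (hanti (le_max_right j k) (mem_biUnion hq (htree _ q hq).2))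
  exact mem_biUnion hr ((htree k r hr).1.mem_of_prefix (hup.trans hpq) hqr)

end Fusion

def IsFusionStage (R : Set (List Bool)) (S : Set (Set (List Bool) × List Bool)) : Prop :=
  S.Finite ∧ ∀ p ∈ S, IsPerfectTree p.1 ∧ p.1 ⊆ R ∧ p.2 ∈ p.1

def IsFusionStep (A : ℕ → Set (ℕ → Bool)) (x y : Set (Set (List Bool) × List Bool) × ℕ) :
    Prop :=
  x.2 < y.2 ∧ StemsSplitInto x.1 y.1 ∧
    (⋃ q ∈ y.1, q.1) ⊆ (⋃ p ∈ x.1, p.1) ∧ ∀ q ∈ y.1, branches q.1 ⊆ A y.2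

namespace FrequentlyRefinable

variable {R : Set (List Bool)} {A : ℕ → Set (ℕ → Bool)}

theorem exists_isFusionStep (hA : FrequentlyRefinable R A)
    {S : Set (Set (List Bool) × List Bool)} (hS : IsFusionStage R S) (m : ℕ) :
    ∃ y, IsFusionStage R y.1 ∧ IsFusionStep A (S, m) y := by
  obtain ⟨hfin, hS⟩ := hS
  have hcones : ∀ P ∈ (fun p => treeCone p.1 p.2) '' S, IsPerfectTree P ∧ P ⊆ R := by
    rintro _ ⟨p, hp, rfl⟩
    exact ⟨(hS p hp).1.treeCone (hS p hp).2.2, (treeCone_subset _ _).trans (hS p hp).2.1⟩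
  obtain ⟨m', hm', hrefine⟩ := hA _ (hfin.image _) hcones (m + 1)
  have hsplit : ∀ p ∈ S, ∃ Q w, IsPerfectTree Q ∧ Q ⊆ p.1 ∧ branches Q ⊆ A m' ∧
      p.2 <+: w ∧ ∀ i : Bool, w ++ [i] ∈ Q := by
    intro p hp
    obtain ⟨Q, hQ, hQcone, hQA⟩ := hrefine _ (mem_image_of_mem _ hp)
    obtain ⟨w, hpw, hchild⟩ := hQ.exists_split_above_of_subset_treeCone hQcone
    exact ⟨Q, w, hQ, hQcone.trans (treeCone_subset _ _), hQA, hpw, hchild⟩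
  choose! Q w hQ hQp hQA hpw hchild using hsplit
  refine ⟨((fun q => (Q q.1, w q.1 ++ [q.2])) '' (S ×ˢ univ), m'),
    ⟨(hfin.prod finite_univ).image _, ?_⟩, hm', fun p hp => ⟨w p, hpw p hp, fun i => ?_⟩, ?_, ?_⟩
  · rintro _ ⟨⟨p, i⟩, ⟨hp, -⟩, rfl⟩
    exact ⟨hQ p hp, (hQp p hp).trans (hS p hp).2.1, hchild p hp i⟩
  · exact ⟨Q p, mem_image_of_mem _ (mk_mem_prod hp (mem_univ i))⟩
  · simp only [iUnion_subset_iff, mem_image, mem_prod, mem_univ, and_true]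
    rintro _ ⟨⟨p, i⟩, hp, rfl⟩
    exact (hQp p hp).trans (subset_biUnion_of_mem hp)
  · rintro _ ⟨⟨p, i⟩, ⟨hp, -⟩, rfl⟩
    exact hQA p hp

theorem exists_perfectTree_branches_subset (hR : IsPerfectTree R)
    (hA : FrequentlyRefinable R A) :
    ∃ Q, IsPerfectTree Q ∧ ∃ φ : ℕ → ℕ, StrictMono φ ∧ ∀ k, branches Q ⊆ A (φ k) := by
  choose! next hnext_stage hnext_step using
    fun (x : Set (Set (List Bool) × List Bool) × ℕ) (hx : IsFusionStage R x.1) =>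
      hA.exists_isFusionStep hx x.2
  set s : ℕ → Set (Set (List Bool) × List Bool) × ℕ := fun k => next^[k] ({(R, [])}, 0)
  have hstage : ∀ k, IsFusionStage R (s k).1 := by
    intro k
    induction k with
    | zero =>
      refine ⟨finite_singleton _, fun p hp => ?_⟩
      rw [mem_singleton_iff.mp hp]
      exact ⟨hR, subset_rfl, hR.nil_mem⟩
    | succ k ih => simpa only [s, Function.iterate_succ_apply'] using hnext_stage _ ih
  have hstep (k : ℕ) : IsFusionStep A (s k) (s (k + 1)) := by
    simpa only [s, Function.iterate_succ_apply'] using hnext_step _ (hstage k)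
  have htree (k : ℕ) : ∀ p ∈ (s k).1, IsPerfectTree p.1 ∧ p.2 ∈ p.1 :=
    fun p hp => ⟨((hstage k).2 p hp).1, ((hstage k).2 p hp).2.2⟩
  refine ⟨fusionLimit fun k => (s k).1,
    isPerfectTree_fusionLimit ⟨(R, []), rfl⟩ fun k => (hstep k).2.1,
    fun k => (s (k + 1)).2, strictMono_nat_of_lt_succ fun k => (hstep (k + 1)).1, fun k => ?_⟩
  calc branches (fusionLimit fun k => (s k).1)
      ⊆ branches (⋃ q ∈ (s (k + 1)).1, q.1) := branches_mono
        (fusionLimit_subset_biUnion htree (fun k => (hstep k).2.1) (fun k => (hstep k).2.2.1) _)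
    _ ⊆ ⋃ q ∈ (s (k + 1)).1, branches q.1 :=
        branches_biUnion_subset (hstage _).1 fun q hq => (htree _ q hq).1.2.1
    _ ⊆ A (s (k + 1)).2 := iUnion₂_subset (hstep k).2.2.2

end FrequentlyRefinable

/-- For a sequence of (s)-measurable `{0,1}`-valued functions there is a perfect tree `Q`
and a subsequence converging uniformly (i.e. eventually constant) on `[Q]`. -/
theorem sMeasurable_unif_convergent_subseq (f : ℕ → (ℕ → Bool) → Bool)
    (hmeas : ∀ n (U : Set Bool), MarczewskiS (f n ⁻¹' U)) :
    ∃ Q, IsPerfectTree Q ∧ ∃ n : ℕ → ℕ, StrictMono n ∧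
      ∃ (g : (ℕ → Bool) → Bool) (N : ℕ),
        ∀ k ≥ N, ∀ x ∈ branches Q, f (n k) x = g x := by
  obtain ⟨R, b, hR, hrefinable⟩ :=
    exists_frequentlyRefinable_preimage_singleton f fun n => hmeas n {true}
  obtain ⟨Q, hQ, φ, hφ, hQφ⟩ := hrefinable.exists_perfectTree_branches_subset hR
  exact ⟨Q, hQ, φ, hφ, fun _ => b, 0, fun k _ x hx => hQφ k hx⟩
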